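/- For n = 5 and k = 3, the minimum of T(Q) over all complete sequences Q equals 65/16; this minimum is attained, for example, by the sequence obtained from the pattern shifting sequence ({0,1,2}, {1,2,3}, {2,3,4}, {0,1,3}, {1,2,4}, {0,1,4}, {0,2,3}, {1,3,4}, {0,2,4}, {0,3,4}) by swapping its second and tenth queries. -/

import Mathlib

/-!
A query lies in exactly one 3-element scene, itself, and in two 4-element scenes. So after `m`
queries at most `m` of the ten 3-element scenes and at most `2m` of the five 4-element scenes are
discovered, i.e. at least `10 - m`, resp. `5 - 2m`, of them have `τ > m`. Summing over `m`
(`Σ τ = Σ_m #{τ > m}`) gives `Σ τ ≥ 55 + 9 + 1 = 65`, the `1` coming from the full scene;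
`swappedQ` attains this bound.
-/

/-- The set of scenes: subsets of `Fin n` with at least `k` elements. -/
def scenes (n k : ℕ) : Finset (Finset (Fin n)) :=
  Finset.univ.filter fun s => k ≤ s.card

/-- A complete sequence: a list of queries containing every `k`-element
subset of `Fin n` exactly once. -/
def CompleteSeq (n k : ℕ) (Q : List (Finset (Fin n))) : Prop :=
  Q.Nodup ∧ ∀ q : Finset (Fin n), q ∈ Q ↔ q.card = k

/-- `tau n Q s` is the least (1-based) index `i` such that `q_i ⊆ s`. -/
def tau (n : ℕ) (Q : List (Finset (Fin n))) (s : Finset (Fin n)) : ℕ :=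
  Q.findIdx (fun q => decide (q ⊆ s)) + 1

/-- The expected time to discovery `T(Q) = (1/|S|) Σ_{s∈S} τ(Q,s)`. -/
def T (n k : ℕ) (Q : List (Finset (Fin n))) : ℚ :=
  ((scenes n k).card : ℚ)⁻¹ * ∑ s ∈ scenes n k, (tau n Q s : ℚ)

/-- `D n k Q i`: the number of scenes discovered by the query at (1-based)
position `i` of `Q` but not by any earlier query. -/
def D (n k : ℕ) (Q : List (Finset (Fin n))) (i : ℕ) : ℕ :=
  ((scenes n k).filter fun s =>
    Q.getD (i - 1) ∅ ⊆ s ∧ ∀ j < i - 1, ¬ Q.getD j ∅ ⊆ s).card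

/-- The list obtained from `Q` by swapping the queries at (1-based)
positions `i` and `i+1`. -/
def swapAdj (n : ℕ) (Q : List (Finset (Fin n))) (i : ℕ) : List (Finset (Fin n)) :=
  (Q.set (i - 1) (Q.getD i ∅)).set i (Q.getD (i - 1) ∅)

/-- The sequence obtained from the pattern shifting sequence for `n = 5`,
`k = 3` by swapping its second and tenth queries. -/
def swappedQ : List (Finset (Fin 5)) :=
  [{0, 1, 2}, {0, 3, 4}, {2, 3, 4}, {0, 1, 3}, {1, 2, 4},
   {0, 1, 4}, {0, 2, 3}, {1, 3, 4}, {0, 2, 4}, {1, 2, 3}]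

open Finset

section LayerCake

variable {X : Type*}

theorem sum_range_card_filter_lt_le_sum (F : Finset X) (t : X → ℕ) (N : ℕ) :
    ∑ m ∈ range N, #{s ∈ F | m < t s} ≤ ∑ s ∈ F, t s := by
  simp only [card_filter]
  rw [sum_comm]
  refine sum_le_sum fun s _ => ?_
  rw [← card_filter]
  calc #{m ∈ range N | m < t s} ≤ #(range (t s)) :=
        card_le_card fun m hm => mem_range.2 (mem_filter.1 hm).2
    _ = t s := card_range _

theorem sum_range_card_sub_le_sum (F : Finset X) (t : X → ℕ) (b N : ℕ)
    (h : ∀ m < N, #{s ∈ F | t s ≤ m} ≤ b * m) :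
    ∑ m ∈ range N, (#F - b * m) ≤ ∑ s ∈ F, t s := by
  refine le_trans (sum_le_sum fun m hm => ?_) (sum_range_card_filter_lt_le_sum F t N)
  have hsplit := card_filter_add_card_filter_not (s := F) (p := fun s => t s ≤ m)
  simp only [not_le] at hsplit
  have := h m (mem_range.1 hm)
  omega

end LayerCake

section Supersets

variable {α : Type*} [Fintype α] [DecidableEq α]

theorem card_supersets_powersetCard_self_le_one (q : Finset α) :
    #{s ∈ powersetCard q.card univ | q ⊆ s} ≤ 1 :=
  card_le_one.2 fun a ha b hb => by
    simp only [mem_filter, mem_powersetCard_univ] at ha hb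
    exact (eq_of_subset_of_card_le ha.2 ha.1.le).symm.trans (eq_of_subset_of_card_le hb.2 hb.1.le)

theorem card_supersets_powersetCard_succ_le (q : Finset α) :
    #{s ∈ powersetCard (q.card + 1) univ | q ⊆ s} ≤ Fintype.card α - q.card := by
  have hmaps : {s ∈ powersetCard (q.card + 1) (univ : Finset α) | q ⊆ s} ⊆
      qᶜ.image (insert · q) := by
    intro s hs
    simp only [mem_filter, mem_powersetCard_univ] at hs
    have hdiff : #(s \ q) = 1 := by rw [card_sdiff_of_subset hs.2, hs.1]; omega
    obtain ⟨x, hx⟩ := card_eq_one.1 hdiff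
    have hxs : x ∈ s \ q := hx ▸ mem_singleton_self x
    refine mem_image.2 ⟨x, mem_compl.2 (mem_sdiff.1 hxs).2, ?_⟩
    rw [← union_sdiff_of_subset hs.2, hx, insert_eq, union_comm]
  calc _ ≤ #(qᶜ.image (insert · q)) := card_le_card hmaps
    _ ≤ #qᶜ := card_image_le
    _ = Fintype.card α - q.card := card_compl q

end Supersets

section Discovery

variable {n k : ℕ} {Q : List (Finset (Fin n))}

theorem exists_getD_subset_of_tau_le {s : Finset (Fin n)} {m : ℕ} (h : tau n Q s ≤ m) :
    ∃ i < m, Q.getD i ∅ ⊆ s := by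
  refine ⟨Q.findIdx (fun q => decide (q ⊆ s)), by unfold tau at h; omega, ?_⟩
  by_cases hlt : Q.findIdx (fun q => decide (q ⊆ s)) < Q.length
  · rw [List.getD_eq_getElem _ _ hlt]
    exact of_decide_eq_true (List.findIdx_getElem (w := hlt))
  · rw [List.getD_eq_default _ _ (not_lt.1 hlt)]
    exact empty_subset s

theorem card_filter_tau_le_le_sum (F : Finset (Finset (Fin n))) (m : ℕ) :
    #{s ∈ F | tau n Q s ≤ m} ≤ ∑ i ∈ range m, #{s ∈ F | Q.getD i ∅ ⊆ s} := by
  refine (card_le_card fun s hs => ?_).trans card_biUnion_le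
  obtain ⟨hsF, hτ⟩ := mem_filter.1 hs
  obtain ⟨i, hi, hsub⟩ := exists_getD_subset_of_tau_le hτ
  exact mem_biUnion.2 ⟨i, mem_range.2 hi, mem_filter.2 ⟨hsF, hsub⟩⟩

theorem CompleteSeq.length_eq (hQ : CompleteSeq n k Q) : Q.length = n.choose k := by
  have hfin : Q.toFinset = powersetCard k univ := by
    ext q
    simp [hQ.2 q]
  rw [← List.toFinset_card_of_nodup hQ.1, hfin, card_powersetCard, card_univ, Fintype.card_fin]

theorem CompleteSeq.card_getD (hQ : CompleteSeq n k Q) {i : ℕ} (hi : i < Q.length) :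
    (Q.getD i ∅).card = k :=
  (hQ.2 _).1 (List.getD_eq_getElem Q ∅ hi ▸ List.getElem_mem hi)

theorem CompleteSeq.sum_range_sub_le_sum_tau (hQ : CompleteSeq n k Q)
    (F : Finset (Finset (Fin n))) (b : ℕ)
    (hb : ∀ q : Finset (Fin n), q.card = k → #{s ∈ F | q ⊆ s} ≤ b) :
    ∑ m ∈ range (n.choose k), (#F - b * m) ≤ ∑ s ∈ F, tau n Q s := by
  refine sum_range_card_sub_le_sum F _ b _ fun m hm => ?_
  calc #{s ∈ F | tau n Q s ≤ m} ≤ ∑ i ∈ range m, #{s ∈ F | Q.getD i ∅ ⊆ s} :=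
        card_filter_tau_le_le_sum F m
    _ ≤ ∑ i ∈ range m, b := sum_le_sum fun i hi =>
        hb _ (hQ.card_getD (by rw [hQ.length_eq]; exact (mem_range.1 hi).trans hm))
    _ = b * m := by rw [sum_const, card_range, smul_eq_mul, mul_comm]

end Discovery

theorem sum_tau_five_three_ge (Q : List (Finset (Fin 5))) (hQ : CompleteSeq 5 3 Q) :
    65 ≤ ∑ s ∈ scenes 5 3, tau 5 Q s := by
  have hsplit : scenes 5 3 = (powersetCard 3 univ ∪ powersetCard 4 univ) ∪ {univ} := by decide
  rw [hsplit, sum_union (by decide), sum_union (by decide), sum_singleton]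
  have h3 : 55 ≤ ∑ s ∈ powersetCard 3 univ, tau 5 Q s :=
    le_trans (by decide) <| hQ.sum_range_sub_le_sum_tau _ 1 fun q hq =>
      hq ▸ card_supersets_powersetCard_self_le_one q
  have h4 : 9 ≤ ∑ s ∈ powersetCard 4 univ, tau 5 Q s :=
    le_trans (by decide) <| hQ.sum_range_sub_le_sum_tau _ 2 fun q hq => by
      simpa [hq] using card_supersets_powersetCard_succ_le q
  have huniv : 1 ≤ tau 5 Q univ := Nat.le_add_left _ _
  omega

theorem T_eq_div {n k : ℕ} (Q : List (Finset (Fin n))) :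
    T n k Q = (∑ s ∈ scenes n k, tau n Q s : ℕ) / #(scenes n k) := by
  rw [T, Nat.cast_sum, inv_mul_eq_div]

/-- For `n = 5`, `k = 3`, the minimum of `T` over all complete sequences is
`65/16`, attained by the sequence obtained from the pattern shifting sequence
by swapping its second and tenth queries. -/
theorem min_T_eq :
    CompleteSeq 5 3 swappedQ ∧ T 5 3 swappedQ = 65 / 16 ∧
    ∀ Q : List (Finset (Fin 5)), CompleteSeq 5 3 Q → 65 / 16 ≤ T 5 3 Q := by
  have hcard : #(scenes 5 3) = 16 := by decide
  refine ⟨⟨by decide, by decide⟩, ?_, fun Q hQ => ?_⟩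
  · have hsum : ∑ s ∈ scenes 5 3, tau 5 swappedQ s = 65 := by decide
    rw [T_eq_div, hsum, hcard]
    norm_num
  · rw [T_eq_div, hcard]
    exact div_le_div_of_nonneg_right (by exact_mod_cast sum_tau_five_three_ge Q hQ) (by norm_num)
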